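/- Let P₀ = N(0, Σ₀) and P₁ = N(0, Σ₁) be trivariate centered Gaussians with Σ₀ having unit variances, ρ₁₂ = 0, and correlations ρ₁₃, ρ₂₃, and Σ₁ identical except ρ₁₂ replaced by ρ₁₃ρ₂₃. Then the squared Hellinger distance satisfies H²(P₀, P₁) = 1 - |Σ₀|^{1/4}|Σ₁|^{1/4}/|((Σ₀+Σ₁)/2)|^{1/2}, and as ρ₁₃, ρ₂₃ → 0, H²(P₀, P₁) = ρ₁₃²ρ₂₃²/8 + O(ρ₁₃⁴ + ρ₂₃⁴). -/

import Mathlib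

/-!
The square roots of the two densities multiply to an unnormalised centred Gaussian with
precision matrix `(A⁻¹ + B⁻¹)/2 = A⁻¹ ((A + B)/2) B⁻¹`, so the Gaussian integral
`∫ exp (-xᵀQx/2) = √((2π)ⁿ / det Q)` (substitute `y = Q^{1/2} x`) gives the Hellinger affinity
in closed form, and `H² = 1 - affinity` because both densities integrate to one.

For the two correlation matrices, `det Σ₀ = 1 - ρ₁₃² - ρ₂₃²`, `det Σ₁ = (1 - ρ₁₃²)(1 - ρ₂₃²)` and
`det ((Σ₀ + Σ₁)/2) = det Σ₀ + ¾ ρ₁₃²ρ₂₃²`, whence `1 - affinity⁴ ≤ ρ₁₃²ρ₂₃²` for small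
correlations. As `0 ≤ affinity ≤ 1`, also `H² ≤ ρ₁₃²ρ₂₃² ≤ (ρ₁₃⁴ + ρ₂₃⁴)/2`.
-/

open MeasureTheory Matrix Real

/-- Density of the centered trivariate Gaussian `N(0, A)` with respect to Lebesgue
measure on `ℝ³`. -/
noncomputable def gaussDensity3 (A : Matrix (Fin 3) (Fin 3) ℝ) (x : Fin 3 → ℝ) : ℝ :=
  (Real.sqrt ((2 * π) ^ 3 * A.det))⁻¹ *
    Real.exp (-(∑ i, ∑ j, x i * A⁻¹ i j * x j) / 2)

/-- Squared Hellinger distance between two centered trivariate Gaussians. -/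
noncomputable def hellingerSqGauss3 (A B : Matrix (Fin 3) (Fin 3) ℝ) : ℝ :=
  (1 / 2) * ∫ x : Fin 3 → ℝ,
    (Real.sqrt (gaussDensity3 A x) - Real.sqrt (gaussDensity3 B x)) ^ 2

/-- The correlation matrix of `Σ₀` (marginal independence: `ρ₁₂ = 0`). -/
noncomputable def corr0 (ρ₁₃ ρ₂₃ : ℝ) : Matrix (Fin 3) (Fin 3) ℝ :=
  !![1, 0, ρ₁₃; 0, 1, ρ₂₃; ρ₁₃, ρ₂₃, 1]

/-- The correlation matrix of `Σ₁` (conditional independence: `ρ₁₂ = ρ₁₃ρ₂₃`). -/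
noncomputable def corr1 (ρ₁₃ ρ₂₃ : ℝ) : Matrix (Fin 3) (Fin 3) ℝ :=
  !![1, ρ₁₃ * ρ₂₃, ρ₁₃; ρ₁₃ * ρ₂₃, 1, ρ₂₃; ρ₁₃, ρ₂₃, 1]

section GaussianIntegral

variable {ι : Type*} [Fintype ι]

lemma dotProduct_mulVec_eq_sum_sum (M : Matrix ι ι ℝ) (x : ι → ℝ) :
    x ⬝ᵥ M *ᵥ x = ∑ i, ∑ j, x i * M i j * x j := by
  simp only [dotProduct, mulVec, Finset.mul_sum, mul_assoc]

lemma exp_neg_dotProduct_self_div_two (y : ι → ℝ) :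
    exp (-(y ⬝ᵥ y) / 2) = ∏ i, exp (-(1 / 2) * y i ^ 2) := by
  rw [← exp_sum, dotProduct, ← Finset.sum_neg_distrib, Finset.sum_div]
  exact congrArg exp (Finset.sum_congr rfl fun _ _ ↦ by ring)

lemma integrable_exp_neg_dotProduct_self_div_two :
    Integrable (fun y : ι → ℝ ↦ exp (-(y ⬝ᵥ y) / 2)) := by
  simp_rw [exp_neg_dotProduct_self_div_two]
  exact Integrable.fintype_prod (f := fun _ t ↦ exp (-(1 / 2) * t ^ 2))
    fun _ ↦ integrable_exp_neg_mul_sq (by norm_num)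

lemma integral_exp_neg_dotProduct_self_div_two :
    ∫ y : ι → ℝ, exp (-(y ⬝ᵥ y) / 2) = √((2 * π) ^ Fintype.card ι) := by
  simp_rw [exp_neg_dotProduct_self_div_two]
  rw [integral_fintype_prod_volume_eq_pow (fun t ↦ exp (-(1 / 2) * t ^ 2)), integral_gaussian,
    ← sqrt_sq (pow_nonneg (sqrt_nonneg _) _), ← pow_mul, mul_comm, pow_mul,
    sq_sqrt (by positivity)]
  norm_num [div_div_eq_mul_div, mul_comm]

variable [DecidableEq ι]

lemma measurableEmbedding_mulVec {M : Matrix ι ι ℝ} (hM : M.det ≠ 0) :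
    MeasurableEmbedding (M *ᵥ ·) :=
  ((toLin' M).equivOfDetNeZero (by rwa [LinearMap.det_toLin'])).toContinuousLinearEquiv
    |>.toHomeomorph.measurableEmbedding

lemma map_mulVec_volume {M : Matrix ι ι ℝ} (hM : M.det ≠ 0) :
    Measure.map (M *ᵥ ·) volume = ENNReal.ofReal |M.det⁻¹| • volume :=
  Real.map_matrix_volume_pi_eq_smul_volume_pi hM

lemma integrable_comp_mulVec {M : Matrix ι ι ℝ} (hM : M.det ≠ 0) {g : (ι → ℝ) → ℝ}
    (hg : Integrable g) : Integrable (fun x ↦ g (M *ᵥ x)) := by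
  rw [← Function.comp_def, ← (measurableEmbedding_mulVec hM).integrable_map_iff,
    map_mulVec_volume hM]
  exact hg.smul_measure ENNReal.ofReal_ne_top

lemma integral_comp_mulVec {M : Matrix ι ι ℝ} (hM : M.det ≠ 0) (g : (ι → ℝ) → ℝ) :
    ∫ x, g (M *ᵥ x) = |M.det|⁻¹ * ∫ y, g y := by
  rw [← (measurableEmbedding_mulVec hM).integral_map, map_mulVec_volume hM, integral_smul_measure,
    ENNReal.toReal_ofReal (abs_nonneg _), abs_inv, smul_eq_mul]

open scoped MatrixOrder

lemma dotProduct_mulVec_eq_sqrt {Q : Matrix ι ι ℝ} (x : ι → ℝ) (hQ : Q.PosSemidef) :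
    x ⬝ᵥ Q *ᵥ x = (CFC.sqrt Q *ᵥ x) ⬝ᵥ (CFC.sqrt Q *ᵥ x) := by
  have hS : (CFC.sqrt Q)ᵀ = CFC.sqrt Q := by
    simpa [IsHermitian] using (nonneg_iff_posSemidef.1 (CFC.sqrt_nonneg Q)).isHermitian
  conv_lhs => rw [← CFC.sqrt_mul_sqrt_self Q hQ.nonneg, ← mulVec_mulVec, dotProduct_mulVec,
    ← mulVec_transpose, hS]

theorem integrable_exp_neg_dotProduct_mulVec {Q : Matrix ι ι ℝ} (hQ : Q.PosDef) :
    Integrable (fun x : ι → ℝ ↦ exp (-(x ⬝ᵥ Q *ᵥ x) / 2)) := by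
  have hS : (CFC.sqrt Q).det ≠ 0 := by
    rw [hQ.posSemidef.det_sqrt, RCLike.sqrt_real]
    exact (sqrt_pos.2 hQ.det_pos).ne'
  simp_rw [dotProduct_mulVec_eq_sqrt _ hQ.posSemidef]
  exact integrable_comp_mulVec hS integrable_exp_neg_dotProduct_self_div_two

theorem integral_exp_neg_dotProduct_mulVec {Q : Matrix ι ι ℝ} (hQ : Q.PosDef) :
    ∫ x : ι → ℝ, exp (-(x ⬝ᵥ Q *ᵥ x) / 2) = √((2 * π) ^ Fintype.card ι / Q.det) := by
  have hS : (CFC.sqrt Q).det = √Q.det := by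
    rw [hQ.posSemidef.det_sqrt, RCLike.sqrt_real]
  simp_rw [dotProduct_mulVec_eq_sqrt _ hQ.posSemidef]
  rw [integral_comp_mulVec (hS ▸ (sqrt_pos.2 hQ.det_pos).ne') (fun y ↦ exp (-(y ⬝ᵥ y) / 2)),
    integral_exp_neg_dotProduct_self_div_two, hS, abs_of_nonneg (sqrt_nonneg _),
    sqrt_div' _ hQ.det_pos.le, inv_mul_eq_div]

end GaussianIntegral

section GaussAffinity

variable {ι : Type*} [Fintype ι] [DecidableEq ι] {A B : Matrix ι ι ℝ}

noncomputable def gaussAffinity (A B : Matrix ι ι ℝ) : ℝ :=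
  A.det ^ (1 / 4 : ℝ) * B.det ^ (1 / 4 : ℝ) / √((1 / 2 : ℝ) • (A + B)).det

lemma gaussAffinity_nonneg (hA : 0 ≤ A.det) (hB : 0 ≤ B.det) : 0 ≤ gaussAffinity A B := by
  unfold gaussAffinity; positivity

lemma gaussAffinity_pow_four (hA : 0 ≤ A.det) (hB : 0 ≤ B.det)
    (hAB : 0 ≤ ((1 / 2 : ℝ) • (A + B)).det) :
    gaussAffinity A B ^ 4 = A.det * B.det / ((1 / 2 : ℝ) • (A + B)).det ^ 2 := by
  have h4 : ∀ {t : ℝ}, 0 ≤ t → (t ^ (1 / 4 : ℝ)) ^ 4 = t := fun ht ↦ by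
    rw [← rpow_natCast, ← rpow_mul ht]; norm_num
  rw [gaussAffinity, div_pow, mul_pow, h4 hA, h4 hB, pow_mul' √_ 2 2, sq_sqrt hAB]

lemma eq_gaussAffinity_of_pow_four (hA : 0 ≤ A.det) (hB : 0 ≤ B.det)
    (hAB : 0 ≤ ((1 / 2 : ℝ) • (A + B)).det) {K : ℝ} (hK : 0 ≤ K)
    (hK4 : K ^ 4 = A.det * B.det / ((1 / 2 : ℝ) • (A + B)).det ^ 2) :
    K = gaussAffinity A B :=
  (pow_left_inj₀ hK (gaussAffinity_nonneg hA hB) four_ne_zero).1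
    (hK4.trans (gaussAffinity_pow_four hA hB hAB).symm)

end GaussAffinity

section GaussDensity3

variable {A B : Matrix (Fin 3) (Fin 3) ℝ}

lemma gaussDensity3_eq (A : Matrix (Fin 3) (Fin 3) ℝ) (x : Fin 3 → ℝ) :
    gaussDensity3 A x = (√((2 * π) ^ 3 * A.det))⁻¹ * exp (-(x ⬝ᵥ A⁻¹ *ᵥ x) / 2) := by
  rw [gaussDensity3, dotProduct_mulVec_eq_sum_sum]

lemma gaussDensity3_nonneg (A : Matrix (Fin 3) (Fin 3) ℝ) (x : Fin 3 → ℝ) :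
    0 ≤ gaussDensity3 A x := by
  rw [gaussDensity3]; positivity

lemma integrable_gaussDensity3 (hA : A.PosDef) : Integrable (gaussDensity3 A) := by
  simp_rw [funext (gaussDensity3_eq A)]
  exact (integrable_exp_neg_dotProduct_mulVec hA.inv).const_mul _

lemma integral_gaussDensity3 (hA : A.PosDef) : ∫ x, gaussDensity3 A x = 1 := by
  have hdet := hA.det_pos
  simp_rw [gaussDensity3_eq A]
  rw [integral_const_mul, integral_exp_neg_dotProduct_mulVec hA.inv, det_nonsing_inv,
    Ring.inverse_eq_inv', Fintype.card_fin, div_inv_eq_mul,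
    inv_mul_cancel₀ (sqrt_pos.2 (by positivity)).ne']

lemma sqrt_gaussDensity3_mul_sqrt (A B : Matrix (Fin 3) (Fin 3) ℝ) (x : Fin 3 → ℝ) :
    √(gaussDensity3 A x) * √(gaussDensity3 B x) =
      √(√((2 * π) ^ 3 * A.det))⁻¹ * √(√((2 * π) ^ 3 * B.det))⁻¹ *
        exp (-(x ⬝ᵥ ((1 / 2 : ℝ) • (A⁻¹ + B⁻¹)) *ᵥ x) / 2) := by
  simp only [gaussDensity3_eq, sqrt_mul (inv_nonneg.2 (sqrt_nonneg _)), ← exp_half]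
  rw [mul_mul_mul_comm, ← exp_add, smul_mulVec, add_mulVec, dotProduct_smul, dotProduct_add,
    smul_eq_mul]
  ring_nf

lemma integrable_sqrt_gaussDensity3_mul_sqrt (hA : A.PosDef) (hB : B.PosDef) :
    Integrable (fun x ↦ √(gaussDensity3 A x) * √(gaussDensity3 B x)) := by
  simp_rw [sqrt_gaussDensity3_mul_sqrt A B]
  exact (integrable_exp_neg_dotProduct_mulVec
    ((hA.inv.add hB.inv).smul (by norm_num : (0 : ℝ) < 1 / 2))).const_mul _

lemma integral_sqrt_gaussDensity3_mul_sqrt (hA : A.PosDef) (hB : B.PosDef) :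
    ∫ x, √(gaussDensity3 A x) * √(gaussDensity3 B x) = gaussAffinity A B := by
  set M := (1 / 2 : ℝ) • (A + B)
  have hM : M.PosDef := (hA.add hB).smul (by norm_num)
  have hdetA := hA.det_pos
  have hdetB := hB.det_pos
  have hdetM := hM.det_pos
  have hQ : A⁻¹ * M * B⁻¹ = (1 / 2 : ℝ) • (A⁻¹ + B⁻¹) := by
    rw [Matrix.mul_smul, Matrix.smul_mul, Matrix.mul_add, Matrix.add_mul,
      nonsing_inv_mul A (isUnit_iff_ne_zero.2 hdetA.ne'), Matrix.mul_assoc,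
      mul_nonsing_inv B (isUnit_iff_ne_zero.2 hdetB.ne'), Matrix.one_mul, Matrix.mul_one,
      add_comm]
  have hdetQ : ((1 / 2 : ℝ) • (A⁻¹ + B⁻¹)).det = M.det / (A.det * B.det) := by
    rw [← hQ, det_mul, det_mul, det_nonsing_inv, det_nonsing_inv, Ring.inverse_eq_inv']
    field_simp
  simp_rw [sqrt_gaussDensity3_mul_sqrt A B]
  rw [integral_const_mul,
    integral_exp_neg_dotProduct_mulVec ((hA.inv.add hB.inv).smul (by norm_num)), hdetQ,
    Fintype.card_fin]
  refine eq_gaussAffinity_of_pow_four hdetA.le hdetB.le hdetM.le (by positivity) ?_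
  change _ = _ / M.det ^ 2
  have h4 : ∀ {t : ℝ}, 0 ≤ t → √(√t)⁻¹ ^ 4 = t⁻¹ := fun ht ↦ by
    rw [pow_mul' _ 2 2, sq_sqrt (by positivity), inv_pow, sq_sqrt ht]
  rw [mul_pow, mul_pow, h4 (by positivity), h4 (by positivity), pow_mul' √_ 2 2,
    sq_sqrt (by positivity)]
  field_simp

lemma hellingerSqGauss3_eq_one_sub_gaussAffinity (hA : A.PosDef) (hB : B.PosDef) :
    hellingerSqGauss3 A B = 1 - gaussAffinity A B := by
  have hsq : ∀ x, (√(gaussDensity3 A x) - √(gaussDensity3 B x)) ^ 2 =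
      gaussDensity3 A x + gaussDensity3 B x -
        2 * (√(gaussDensity3 A x) * √(gaussDensity3 B x)) := fun x ↦ by
    rw [sub_sq, sq_sqrt (gaussDensity3_nonneg A x), sq_sqrt (gaussDensity3_nonneg B x)]
    ring
  have hsum : Integrable (fun x ↦ gaussDensity3 A x + gaussDensity3 B x) :=
    (integrable_gaussDensity3 hA).add (integrable_gaussDensity3 hB)
  rw [hellingerSqGauss3, integral_congr_ae (.of_forall hsq), integral_sub hsum
      ((integrable_sqrt_gaussDensity3_mul_sqrt hA hB).const_mul 2),
    integral_add (integrable_gaussDensity3 hA) (integrable_gaussDensity3 hB),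
    integral_const_mul, integral_gaussDensity3 hA, integral_gaussDensity3 hB,
    integral_sqrt_gaussDensity3_mul_sqrt hA hB]
  ring

lemma hellingerSqGauss3_nonneg (A B : Matrix (Fin 3) (Fin 3) ℝ) : 0 ≤ hellingerSqGauss3 A B :=
  mul_nonneg (by norm_num) (integral_nonneg fun _ ↦ sq_nonneg _)

end GaussDensity3

lemma posDef_of_abs_le {a b c : ℝ} (ha : |a| ≤ 1 / 4) (hb : |b| ≤ 1 / 4) (hc : |c| ≤ 1 / 4) :
    (!![1, c, a; c, 1, b; a, b, 1] : Matrix (Fin 3) (Fin 3) ℝ).PosDef := by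
  rw [abs_le] at ha hb hc
  refine posDef_iff_dotProduct_mulVec.2 ⟨?_, fun x hx ↦ ?_⟩
  · ext i j
    fin_cases i <;> fin_cases j <;> rfl
  have hx' := dotProduct_star_self_pos_iff.2 hx
  -- `xᵀMx = ½‖x‖² + ½ ∑_{i<j} ((¼ + mᵢⱼ)(xᵢ + xⱼ)² + (¼ - mᵢⱼ)(xᵢ - xⱼ)²)`
  simp only [dotProduct, mulVec, Fin.sum_univ_three, star_trivial, of_apply, cons_val',
    cons_val_zero, cons_val_one, cons_val, cons_val_fin_one] at hx' ⊢
  nlinarith [mul_nonneg (by linarith : (0 : ℝ) ≤ 1 / 4 + a) (sq_nonneg (x 0 + x 2)),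
    mul_nonneg (by linarith : (0 : ℝ) ≤ 1 / 4 - a) (sq_nonneg (x 0 - x 2)),
    mul_nonneg (by linarith : (0 : ℝ) ≤ 1 / 4 + b) (sq_nonneg (x 1 + x 2)),
    mul_nonneg (by linarith : (0 : ℝ) ≤ 1 / 4 - b) (sq_nonneg (x 1 - x 2)),
    mul_nonneg (by linarith : (0 : ℝ) ≤ 1 / 4 + c) (sq_nonneg (x 0 + x 1)),
    mul_nonneg (by linarith : (0 : ℝ) ≤ 1 / 4 - c) (sq_nonneg (x 0 - x 1))]

lemma det_corr0 (a b : ℝ) : (corr0 a b).det = 1 - a ^ 2 - b ^ 2 := by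
  simp only [corr0, det_fin_three, of_apply, cons_val', cons_val_zero, cons_val_one, cons_val,
    cons_val_fin_one]
  ring

lemma det_corr1 (a b : ℝ) : (corr1 a b).det = (1 - a ^ 2) * (1 - b ^ 2) := by
  simp only [corr1, det_fin_three, of_apply, cons_val', cons_val_zero, cons_val_one, cons_val,
    cons_val_fin_one]
  ring

lemma det_half_smul_corr0_add_corr1 (a b : ℝ) :
    ((1 / 2 : ℝ) • (corr0 a b + corr1 a b)).det = 1 - a ^ 2 - b ^ 2 + 3 / 4 * (a ^ 2 * b ^ 2) := by
  simp only [corr0, corr1, of_add_of, add_cons, head_cons, tail_cons, empty_add_empty, smul_of,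
    smul_cons, smul_eq_mul, smul_empty, det_fin_three, of_apply, cons_val', cons_val_zero,
    cons_val_one, cons_val, cons_val_fin_one]
  ring

lemma corr0_posDef {a b : ℝ} (ha : |a| ≤ 1 / 4) (hb : |b| ≤ 1 / 4) : (corr0 a b).PosDef :=
  posDef_of_abs_le ha hb (by norm_num)

lemma corr1_posDef {a b : ℝ} (ha : |a| ≤ 1 / 4) (hb : |b| ≤ 1 / 4) : (corr1 a b).PosDef :=
  posDef_of_abs_le ha hb (by rw [abs_mul]; nlinarith [abs_nonneg a, abs_nonneg b])

lemma one_sub_gaussAffinity_corr_pow_four_le {a b : ℝ} (ha : |a| ≤ 1 / 4) (hb : |b| ≤ 1 / 4) :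
    1 - gaussAffinity (corr0 a b) (corr1 a b) ^ 4 ≤ a ^ 2 * b ^ 2 := by
  have hp : a ^ 2 ≤ 1 / 16 := by nlinarith [sq_abs a, abs_nonneg a]
  have hq : b ^ 2 ≤ 1 / 16 := by nlinarith [sq_abs b, abs_nonneg b]
  have hu : 0 ≤ a ^ 2 * b ^ 2 := by positivity
  have hu' : a ^ 2 * b ^ 2 ≤ 1 / 256 := by nlinarith [sq_nonneg a, sq_nonneg b]
  have hm : 0 < 1 - a ^ 2 - b ^ 2 + 3 / 4 * (a ^ 2 * b ^ 2) := by linarith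
  rw [gaussAffinity_pow_four (by rw [det_corr0]; linarith) (by rw [det_corr1]; nlinarith)
    (by rw [det_half_smul_corr0_add_corr1]; linarith), det_corr0, det_corr1,
    det_half_smul_corr0_add_corr1, sub_le_comm, le_div_iff₀ (by positivity)]
  -- with `u = a²b²` and `m = det ((Σ₀ + Σ₁)/2)`: `m² - det Σ₀ det Σ₁ = ½ det Σ₀ u + 9/16 u²`
  nlinarith [mul_nonneg hu (sq_nonneg (a ^ 2 + b ^ 2)), mul_nonneg hu (sq_nonneg a),
    mul_nonneg hu (sq_nonneg b), mul_nonneg (mul_nonneg hu hu) (sq_nonneg a),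
    mul_nonneg (mul_nonneg hu hu) (sq_nonneg b), mul_nonneg hu (sub_nonneg.2 hu')]

lemma hellingerSqGauss3_corr_le {a b : ℝ} (ha : |a| ≤ 1 / 4) (hb : |b| ≤ 1 / 4) :
    hellingerSqGauss3 (corr0 a b) (corr1 a b) ≤ a ^ 2 * b ^ 2 := by
  have hH := hellingerSqGauss3_eq_one_sub_gaussAffinity (corr0_posDef ha hb) (corr1_posDef ha hb)
  have hR : 0 ≤ gaussAffinity (corr0 a b) (corr1 a b) :=
    gaussAffinity_nonneg (corr0_posDef ha hb).det_pos.le (corr1_posDef ha hb).det_pos.le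
  have hR1 : gaussAffinity (corr0 a b) (corr1 a b) ≤ 1 := by
    linarith [hellingerSqGauss3_nonneg (corr0 a b) (corr1 a b)]
  linarith [pow_le_of_le_one hR hR1 four_ne_zero, one_sub_gaussAffinity_corr_pow_four_le ha hb]

/-- `H²(P₀,P₁) = 1 - |Σ₀|^{1/4}|Σ₁|^{1/4}/|(Σ₀+Σ₁)/2|^{1/2}`, and as
`ρ₁₃, ρ₂₃ → 0` one has `H² = ρ₁₃²ρ₂₃²/8 + O(ρ₁₃⁴ + ρ₂₃⁴)`. -/
theorem hellinger_gaussian_pair :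
    (∀ ρ₁₃ ρ₂₃ : ℝ, (corr0 ρ₁₃ ρ₂₃).PosDef → (corr1 ρ₁₃ ρ₂₃).PosDef →
      hellingerSqGauss3 (corr0 ρ₁₃ ρ₂₃) (corr1 ρ₁₃ ρ₂₃)
        = 1 - (corr0 ρ₁₃ ρ₂₃).det ^ ((1 : ℝ) / 4) * (corr1 ρ₁₃ ρ₂₃).det ^ ((1 : ℝ) / 4)
            / Real.sqrt (((1 / 2 : ℝ) • (corr0 ρ₁₃ ρ₂₃ + corr1 ρ₁₃ ρ₂₃)).det))
    ∧ ∃ C > (0 : ℝ), ∃ ε > (0 : ℝ), ∀ ρ₁₃ ρ₂₃ : ℝ, |ρ₁₃| < ε → |ρ₂₃| < ε →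
        |hellingerSqGauss3 (corr0 ρ₁₃ ρ₂₃) (corr1 ρ₁₃ ρ₂₃)
            - ρ₁₃ ^ 2 * ρ₂₃ ^ 2 / 8|
          ≤ C * (ρ₁₃ ^ 4 + ρ₂₃ ^ 4) := by
  refine ⟨fun _ _ h₀ h₁ ↦ hellingerSqGauss3_eq_one_sub_gaussAffinity h₀ h₁,
    1, one_pos, 1 / 4, by norm_num, fun a b ha hb ↦ ?_⟩
  have hle := hellingerSqGauss3_corr_le ha.le hb.le
  have hnonneg := hellingerSqGauss3_nonneg (corr0 a b) (corr1 a b)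
  have hu : 0 ≤ a ^ 2 * b ^ 2 := by positivity
  have hAMGM : 2 * (a ^ 2 * b ^ 2) ≤ a ^ 4 + b ^ 4 := by nlinarith [sq_nonneg (a ^ 2 - b ^ 2)]
  rw [abs_le]
  constructor <;> linarith
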